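/- Let τ = (P₁, …, P_s) be a tuple of rational polynomials with positive leading coefficients satisfying P₁ ≻ P₂ ≻ … ≻ P_s in Rudakov's order, let P = Σ P_i, and for m >> n >> 0 set θ = (−P(m), P(n)), α = (P(m), P(n)) and d_i := (P_i(n), P_i(m)). Then θ(d₁)/α(d₁) < θ(d₂)/α(d₂) < … < θ(d_s)/α(d_s) and Σ d_i = (P(n), P(m)); i.e., γ_{n,m}(τ) := (d₁, …, d_s) is a HN type for representations of the Kronecker quiver K_{n,m} of dimension (P(n), P(m)) with respect to (θ, α). -/

import Mathlib

/-!
For `n` fixed and `m → ∞`, Rudakov's order makes the ratios `Pᵢ(n)/Pᵢ(m)` strictly decreasing in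
`i`, and all `Pᵢ(n)`, `Pᵢ(m)` are eventually positive. Cross-multiplying, the slope
`θ(d)/α(d)` of `d = (a, b)` increases exactly when `a/b` decreases, because the difference of
the two cross products is `2 P(m) P(n) (a b' - a' b)`.
-/

open Filter

theorem Polynomial.eventually_atTop_eval_pos {𝕜 : Type*} [NormedField 𝕜] [LinearOrder 𝕜]
    [IsStrictOrderedRing 𝕜] [OrderTopology 𝕜] {P : Polynomial 𝕜} (h : 0 < P.leadingCoeff) :
    ∀ᶠ x in atTop, 0 < P.eval x := by
  rcases lt_or_ge 0 P.degree with hdeg | hdeg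
  · exact (P.tendsto_atTop_of_leadingCoeff_nonneg hdeg h.le).eventually_gt_atTop 0
  · exact (P.tendsto_nhds_iff.2 ⟨rfl, hdeg⟩).eventually (lt_mem_nhds h)

theorem Filter.eventually_atTop_eventually_atTop_iff {α : Type*} [SemilatticeSup α] [Nonempty α]
    {p : α → α → Prop} :
    (∀ᶠ n in atTop, ∀ᶠ m in atTop, p n m) ↔ ∃ N₀, ∀ n ≥ N₀, ∃ M ≥ n, ∀ m ≥ M, p n m :=
  eventually_atTop.trans <| exists_congr fun _ => forall₂_congr fun n _ =>
    (atTop_basis' n).eventually_iff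

theorem Fin.strictAnti_of_succ_lt {α : Type*} [Preorder α] {s : ℕ} {f : Fin s → α}
    (h : ∀ (i : ℕ) (hi : i + 1 < s), f ⟨i + 1, hi⟩ < f ⟨i, Nat.lt_of_succ_lt hi⟩) :
    StrictAnti f := by
  cases s with
  | zero => exact fun i => i.elim0
  | succ s => exact Fin.strictAnti_iff_succ_lt.2 fun i => h i (Nat.succ_lt_succ i.isLt)

theorem kronecker_slope_lt_slope_iff {K : Type*} [Field K] [LinearOrder K] [IsStrictOrderedRing K]
    {A B a b a' b' : K} (hA : 0 < A) (hB : 0 < B) (ha : 0 < a) (hb : 0 < b) (ha' : 0 < a')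
    (hb' : 0 < b') :
    (-A * a + B * b) / (A * a + B * b) < (-A * a' + B * b') / (A * a' + B * b') ↔
      a' / b' < a / b := by
  have hcross : (-A * a' + B * b') * (A * a + B * b) - (-A * a + B * b) * (A * a' + B * b') =
      2 * A * B * (a * b' - a' * b) := by ring
  rw [div_lt_div_iff₀ (by positivity) (by positivity), div_lt_div_iff₀ hb' hb, ← sub_pos, hcross,
    ← sub_pos (b := a' * b)]
  exact mul_pos_iff_of_pos_left (by positivity)

theorem stmt_19_general (s : ℕ) (P : Fin s → Polynomial ℚ)
    (hlead : ∀ i, 0 < (P i).leadingCoeff)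
    (hchain : ∀ (i : ℕ) (h : i + 1 < s), ∃ N₀ : ℕ, ∀ n ≥ N₀, ∃ M ≥ n, ∀ m ≥ M,
      (P ⟨i, Nat.lt_of_succ_lt h⟩).eval (n : ℚ) / (P ⟨i, Nat.lt_of_succ_lt h⟩).eval (m : ℚ) >
      (P ⟨i + 1, h⟩).eval (n : ℚ) / (P ⟨i + 1, h⟩).eval (m : ℚ)) :
    ∃ N₀ : ℕ, ∀ n ≥ N₀, ∃ M ≥ n, ∀ m ≥ M,
      (∀ i j : Fin s, i < j →
        (-(∑ l, P l).eval (m : ℚ) * (P i).eval (n : ℚ) +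
              (∑ l, P l).eval (n : ℚ) * (P i).eval (m : ℚ)) /
            ((∑ l, P l).eval (m : ℚ) * (P i).eval (n : ℚ) +
              (∑ l, P l).eval (n : ℚ) * (P i).eval (m : ℚ)) <
        (-(∑ l, P l).eval (m : ℚ) * (P j).eval (n : ℚ) +
              (∑ l, P l).eval (n : ℚ) * (P j).eval (m : ℚ)) /
            ((∑ l, P l).eval (m : ℚ) * (P j).eval (n : ℚ) +
              (∑ l, P l).eval (n : ℚ) * (P j).eval (m : ℚ))) ∧
      (∑ i, (P i).eval (n : ℚ) = (∑ l, P l).eval (n : ℚ) ∧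
        ∑ i, (P i).eval (m : ℚ) = (∑ l, P l).eval (m : ℚ)) := by
  simp only [← eventually_atTop_eventually_atTop_iff] at hchain ⊢
  have hpos : ∀ᶠ x : ℕ in atTop, ∀ i, 0 < (P i).eval (x : ℚ) := eventually_all.2 fun i =>
    tendsto_natCast_atTop_atTop.eventually (Polynomial.eventually_atTop_eval_pos (hlead i))
  have hchain' : ∀ᶠ n : ℕ in atTop, ∀ᶠ m : ℕ in atTop, ∀ (i : Fin s) (h : i.1 + 1 < s),
      (P ⟨i + 1, h⟩).eval (n : ℚ) / (P ⟨i + 1, h⟩).eval (m : ℚ) <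
        (P i).eval (n : ℚ) / (P i).eval (m : ℚ) := by
    simp only [eventually_all]
    exact fun i h => hchain i h
  filter_upwards [hpos, hchain'] with n hn hn'
  filter_upwards [hpos, hn'] with m hm hm'
  have hanti : StrictAnti fun i => (P i).eval (n : ℚ) / (P i).eval (m : ℚ) :=
    Fin.strictAnti_of_succ_lt fun i h => hm' ⟨i, Nat.lt_of_succ_lt h⟩ h
  refine ⟨fun i j hij => ?_, (Polynomial.eval_finsetSum _ _ _).symm,
    (Polynomial.eval_finsetSum _ _ _).symm⟩
  have hsum_pos : ∀ x : ℚ, (∀ l, 0 < (P l).eval x) → 0 < (∑ l, P l).eval x := fun x hx => by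
    rw [Polynomial.eval_finsetSum]
    exact Finset.sum_pos (fun l _ => hx l) ⟨i, Finset.mem_univ i⟩
  exact (kronecker_slope_lt_slope_iff (hsum_pos _ hm) (hsum_pos _ hn) (hn i) (hm i) (hn j)
    (hm j)).2 (hanti hij)

/-- For a HN type `τ = (P₁,…,P_s)` of sheaves (`P₁ ≻ … ≻ P_s` in Rudakov's order)
with `P = Σ Pᵢ`, for `m ≫ n ≫ 0` the dimension vectors `dᵢ = (Pᵢ(n), Pᵢ(m))` have
strictly increasing slopes `θ(dᵢ)/α(dᵢ)` (with `θ = (−P(m), P(n))`,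
`α = (P(m), P(n))`) and sum to `(P(n), P(m))`; i.e. `γ_{n,m}(τ)` is a HN type for
Kronecker quiver representations of dimension `(P(n), P(m))`. -/
theorem stmt_19 (s : ℕ) (hs : 1 ≤ s) (P : Fin s → Polynomial ℚ)
    (hlead : ∀ i, 0 < (P i).leadingCoeff)
    (hchain : ∀ (i : ℕ) (h : i + 1 < s), ∃ N₀ : ℕ, ∀ n ≥ N₀, ∃ M ≥ n, ∀ m ≥ M,
      (P ⟨i, Nat.lt_of_succ_lt h⟩).eval (n : ℚ) / (P ⟨i, Nat.lt_of_succ_lt h⟩).eval (m : ℚ) >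
      (P ⟨i + 1, h⟩).eval (n : ℚ) / (P ⟨i + 1, h⟩).eval (m : ℚ)) :
    ∃ N₀ : ℕ, ∀ n ≥ N₀, ∃ M ≥ n, ∀ m ≥ M,
      (∀ i j : Fin s, i < j →
        (-(∑ l, P l).eval (m : ℚ) * (P i).eval (n : ℚ) +
              (∑ l, P l).eval (n : ℚ) * (P i).eval (m : ℚ)) /
            ((∑ l, P l).eval (m : ℚ) * (P i).eval (n : ℚ) +
              (∑ l, P l).eval (n : ℚ) * (P i).eval (m : ℚ)) <
        (-(∑ l, P l).eval (m : ℚ) * (P j).eval (n : ℚ) +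
              (∑ l, P l).eval (n : ℚ) * (P j).eval (m : ℚ)) /
            ((∑ l, P l).eval (m : ℚ) * (P j).eval (n : ℚ) +
              (∑ l, P l).eval (n : ℚ) * (P j).eval (m : ℚ))) ∧
      (∑ i, (P i).eval (n : ℚ) = (∑ l, P l).eval (n : ℚ) ∧
        ∑ i, (P i).eval (m : ℚ) = (∑ l, P l).eval (m : ℚ)) :=
  stmt_19_general s P hlead hchain
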